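/- arXiv:1904.06099 — 5 statements merged into one kernel-verified Lean document; each statement's English description precedes it below -/
import Mathlib

section
/- For every gtf-model M_μ = (W, μ, ℱ, V) there exists a pointwise-equivalent gtn-model: defining 𝒩^μ_w = {X ⊆ ⋃μ : ∃ O ∈ ℱ_w, O ⊆ X}, the structure (W, 𝒩^μ, V) satisfies all gtn-model conditions, ⋃μ = ⋃𝒩^μ, and every world satisfies the same modal formulas in both models. -/
inductive Form : Type
  | pv : ℕ → Form
  | bot : Form
  | and : Form → Form → Form
  | or : Form → Form → Form
  | imp : Form → Form → Form
  | neg : Form → Form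
  | box : Form → Form

structure GTFModel (W : Type) where
  mu : Set (Set W)
  F : W → Set (Set W)
  V : ℕ → Set W
  mu_empty : (∅ : Set W) ∈ mu
  mu_sUnion : ∀ S ⊆ mu, ⋃₀ S ∈ mu
  F_mem : ∀ w ∈ ⋃₀ mu, ∀ X : Set W, X ∈ F w ↔ (X ∈ mu ∧ w ∈ X)
  F_open : ∀ w ∉ ⋃₀ mu, ∀ X ∈ F w, X ∈ mu

def GTFModel.force {W : Type} (M : GTFModel W) : Form → Set W
  | .pv n => M.V n
  | .bot => ∅
  | .and φ ψ => M.force φ ∩ M.force ψ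
  | .or φ ψ => M.force φ ∪ M.force ψ
  | .imp φ ψ => {w | w ∈ M.force φ → w ∈ M.force ψ}
  | .neg φ => {w | w ∉ M.force φ}
  | .box φ => {w | ∃ O ∈ M.F w, ∀ v ∈ O, v ∈ M.force φ}
def unionN {W : Type} (N : W → Set (Set W)) : Set W :=
  {x | ∃ w, ∃ X ∈ N w, x ∈ X}

structure GTNModel (W : Type) where
  N : W → Set (Set W)
  V : ℕ → Set W
  mixed : ∀ z : W, (∀ X ∈ N z, z ∈ X) ∨ z ∉ unionN N
  upward : ∀ w : W, ∀ X ∈ N w, ∀ Y : Set W, X ⊆ Y → Y ⊆ unionN N → Y ∈ N w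
  core : ∀ w : W, ∀ X ∈ N w, {z | (∀ Y ∈ N z, z ∈ Y) ∧ X ∈ N z} ∈ N w

def GTNModel.force {W : Type} (M : GTNModel W) : Form → Set W
  | .pv n => M.V n
  | .bot => ∅
  | .and φ ψ => M.force φ ∩ M.force ψ
  | .or φ ψ => M.force φ ∪ M.force ψ
  | .imp φ ψ => {w | w ∈ M.force φ → w ∈ M.force ψ}
  | .neg φ => {w | w ∉ M.force φ}
  | .box φ => {w | ∃ X ∈ M.N w, ∀ v ∈ X, v ∈ M.force φ}

/-- Every gtf-model has a pointwise equivalent gtn-model, obtained by taking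
𝒩^μ_w = {X ⊆ ⋃μ : ∃ O ∈ ℱ_w, O ⊆ X}; moreover ⋃μ = ⋃𝒩^μ. -/
theorem stmt7 {W : Type} (Mμ : GTFModel W) :
    ∃ M : GTNModel W,
      M.N = (fun w => {X : Set W | X ⊆ ⋃₀ Mμ.mu ∧ ∃ O ∈ Mμ.F w, O ⊆ X}) ∧
      M.V = Mμ.V ∧
      ⋃₀ Mμ.mu = unionN M.N ∧
      ∀ (w : W) (φ : Form), w ∈ Mμ.force φ ↔ w ∈ M.force φ := by
  set N : W → Set (Set W) :=
    fun w => {X : Set W | X ⊆ ⋃₀ Mμ.mu ∧ ∃ O ∈ Mμ.F w, O ⊆ X} with hN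
  have hOmu : ∀ w : W, ∀ O ∈ Mμ.F w, O ∈ Mμ.mu := by
    intro w O hO
    by_cases h : w ∈ ⋃₀ Mμ.mu
    · exact ((Mμ.F_mem w h O).1 hO).1
    · exact Mμ.F_open w h O hO
  have hmemF : ∀ z ∈ ⋃₀ Mμ.mu, ∀ X ∈ N z, z ∈ X := by
    intro z hz X hX
    obtain ⟨hXsub, O, hO, hOX⟩ := hX
    exact hOX ((Mμ.F_mem z hz O).1 hO).2
  have hzN : ∀ z : W, ∀ X ∈ N z, z ∈ ⋃₀ Mμ.mu → z ∈ X := by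
    intro z X hX hz; exact hmemF z hz X hX
  have hunion : ⋃₀ Mμ.mu = unionN N := by
    ext x
    constructor
    · rintro ⟨O, hO, hxO⟩
      refine ⟨x, ⋃₀ Mμ.mu, ⟨le_refl _, O, ?_, fun y hy => ⟨O, hO, hy⟩⟩, ⟨O, hO, hxO⟩⟩
      exact (Mμ.F_mem x ⟨O, hO, hxO⟩ O).2 ⟨hO, hxO⟩
    · rintro ⟨w, X, hX, hxX⟩
      exact hX.1 hxX
  have mixed : ∀ z : W, (∀ X ∈ N z, z ∈ X) ∨ z ∉ unionN N := by
    intro z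
    by_cases hz : z ∈ ⋃₀ Mμ.mu
    · exact Or.inl (hmemF z hz)
    · right; rw [← hunion]; exact hz
  have upward : ∀ w : W, ∀ X ∈ N w, ∀ Y : Set W, X ⊆ Y → Y ⊆ unionN N → Y ∈ N w := by
    rintro w X ⟨hXsub, O, hO, hOX⟩ Y hXY hYsub
    exact ⟨by rw [hunion]; exact hYsub, O, hO, hOX.trans hXY⟩
  have core : ∀ w : W, ∀ X ∈ N w, {z | (∀ Y ∈ N z, z ∈ Y) ∧ X ∈ N z} ∈ N w := by
    rintro w X ⟨hXsub, O, hO, hOX⟩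
    have hOmu' : O ∈ Mμ.mu := hOmu w O hO
    refine ⟨?_, O, hO, ?_⟩
    · rintro z ⟨hz1, hz2⟩
      exact hXsub (hz1 X hz2)
    · intro z hzO
      have hzU : z ∈ ⋃₀ Mμ.mu := ⟨O, hOmu', hzO⟩
      refine ⟨hmemF z hzU, hXsub, O, ?_, hOX⟩
      exact (Mμ.F_mem z hzU O).2 ⟨hOmu', hzO⟩
  refine ⟨⟨N, Mμ.V, mixed, upward, core⟩, rfl, rfl, hunion, ?_⟩
  intro w φ
  induction φ generalizing w with
  | pv n => exact Iff.rfl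
  | bot => exact Iff.rfl
  | and φ ψ ihφ ihψ =>
      exact and_congr (ihφ w) (ihψ w)
  | or φ ψ ihφ ihψ =>
      exact or_congr (ihφ w) (ihψ w)
  | imp φ ψ ihφ ihψ =>
      exact imp_congr (ihφ w) (ihψ w)
  | neg φ ihφ =>
      exact not_congr (ihφ w)
  | box φ ihφ =>
      constructor
      · rintro ⟨O, hO, hOf⟩
        refine ⟨O, ⟨fun x hx => ⟨O, hOmu w O hO, hx⟩, O, hO, le_refl _⟩,
          fun v hv => (ihφ v).1 (hOf v hv)⟩
      · rintro ⟨X, ⟨hXsub, O, hO, hOX⟩, hXf⟩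
        exact ⟨O, hO, fun v hv => (ihφ v).2 (hXf v (hOX hv))⟩
end

section
/- The axiom scheme 4, i.e. □φ → □□φ, is valid in every gtf-model: for every world w, if w ⊨ □φ then w ⊨ □□φ. -/
/-- Axiom 4: □φ → □□φ is valid in every gtf-model. -/
theorem stmt9 {W : Type} (M : GTFModel W) (w : W) (φ : Form)
    (h : w ∈ M.force (.box φ)) :
    w ∈ M.force (.box (.box φ)) := by
  obtain ⟨O, hO, hall⟩ := h
  have hOmu : O ∈ M.mu := by
    by_cases hw : w ∈ ⋃₀ M.mu
    · exact ((M.F_mem w hw O).mp hO).1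
    · exact M.F_open w hw O hO
  refine ⟨O, hO, fun v hv => ?_⟩
  have hvU : v ∈ ⋃₀ M.mu := ⟨O, hOmu, hv⟩
  exact ⟨O, (M.F_mem v hvU O).mpr ⟨hOmu, hv⟩, hall⟩
end

section
/- If f : W_μ → W_τ is an ℱ-continuous and ℱ-open map between two gtf-frames and V_μ(q) = f⁻¹(V_τ(q)), then the graph of f is a 1-topo-bisimulation between the resulting gtf-models. -/
/-- If f is ℱ-continuous and ℱ-open between two gtf-frames and
V_μ(q) = f⁻¹(V_τ(q)), then the graph of f is a 1-topo-bisimulation. -/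
theorem stmt15 {W W' : Type} (M1 : GTFModel W) (M2 : GTFModel W') (f : W → W')
    (hFcont : ∀ (w : W) (G' : Set W'), G' ∈ M2.F (f w) → f ⁻¹' G' ∈ M1.F w)
    (hFopen : ∀ (w : W) (G : Set W), G ∈ M1.F w → f '' G ∈ M2.F (f w))
    (hV : ∀ q : ℕ, M1.V q = f ⁻¹' (M2.V q)) :
    ∀ (w : W) (w' : W'), f w = w' →
      ((∀ q : ℕ, (w ∈ M1.V q ↔ w' ∈ M2.V q)) ∧
       (∀ O : Set W, O ∈ M1.F w → O.Nonempty → O ∈ M1.mu →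
         ∃ O' ∈ M2.F w', ∀ v' ∈ O', ∃ v ∈ O, f v = v') ∧
       (∀ O' : Set W', O' ∈ M2.F w' → O'.Nonempty → O' ∈ M2.mu →
         ∃ O ∈ M1.F w, ∀ v ∈ O, ∃ v' ∈ O', f v = v')) := by
  rintro w w' rfl
  refine ⟨fun q => by rw [hV]; rfl, ?_, ?_⟩
  · intro O hO _ _
    exact ⟨f '' O, hFopen w O hO, fun v' ⟨v, hv, hfv⟩ => ⟨v, hv, hfv⟩⟩
  · intro O' hO' _ _
    exact ⟨f ⁻¹' O', hFcont w O' hO', fun v hv => ⟨f v, hv, rfl⟩⟩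
end

section
/- If T is a 1-topo-bisimulation between two consistent gtf-models M₁ and M₂ and w T w', then w and w' satisfy exactly the same modal formulas (built from propositional variables, Boolean connectives, and □). -/
/-- A 1-topo-bisimulation between two gtf-models. -/
def IsOneBisim {W W' : Type} (M1 : GTFModel W) (M2 : GTFModel W')
    (T : W → W' → Prop) : Prop :=
  (∃ w w', T w w') ∧
  ∀ w w', T w w' →
    (∀ q : ℕ, (w ∈ M1.V q ↔ w' ∈ M2.V q)) ∧
    (∀ O : Set W, O ∈ M1.F w → O.Nonempty → O ∈ M1.mu →
      ∃ O' ∈ M2.F w', ∀ v' ∈ O', ∃ v ∈ O, T v v') ∧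
    (∀ O' : Set W', O' ∈ M2.F w' → O'.Nonempty → O' ∈ M2.mu →
      ∃ O ∈ M1.F w, ∀ v ∈ O, ∃ v' ∈ O', T v v')

/-- A gtf-model is consistent iff ∅ ∉ ℱ_w for every world. -/
def Consistent {W : Type} (M : GTFModel W) : Prop := ∀ w : W, (∅ : Set W) ∉ M.F w

/-- If T is a 1-topo-bisimulation between two consistent gtf-models and wTw',
then w and w' satisfy exactly the same formulas. -/
theorem stmt16 {W W' : Type} (M1 : GTFModel W) (M2 : GTFModel W')
    (hc1 : Consistent M1) (hc2 : Consistent M2)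
    (T : W → W' → Prop) (hT : IsOneBisim M1 M2 T)
    (w : W) (w' : W') (hww' : T w w') :
    ∀ φ : Form, w ∈ M1.force φ ↔ w' ∈ M2.force φ := by
  have hmu1 : ∀ (v : W) (O : Set W), O ∈ M1.F v → O ∈ M1.mu := by
    intro v O hO
    by_cases h : v ∈ ⋃₀ M1.mu
    · exact ((M1.F_mem v h O).1 hO).1
    · exact M1.F_open v h O hO
  have hmu2 : ∀ (v : W') (O : Set W'), O ∈ M2.F v → O ∈ M2.mu := by
    intro v O hO
    by_cases h : v ∈ ⋃₀ M2.mu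
    · exact ((M2.F_mem v h O).1 hO).1
    · exact M2.F_open v h O hO
  suffices h : ∀ φ : Form, ∀ v v', T v v' → (v ∈ M1.force φ ↔ v' ∈ M2.force φ) from
    fun φ => h φ w w' hww'
  intro φ
  induction φ with
  | pv n => intro v v' hvv'; exact (hT.2 v v' hvv').1 n
  | bot => intro v v' _; simp [GTFModel.force]
  | and φ ψ ihφ ihψ =>
      intro v v' hvv'
      simp only [GTFModel.force, Set.mem_inter_iff]
      exact and_congr (ihφ v v' hvv') (ihψ v v' hvv')
  | or φ ψ ihφ ihψ =>
      intro v v' hvv'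
      simp only [GTFModel.force, Set.mem_union]
      exact or_congr (ihφ v v' hvv') (ihψ v v' hvv')
  | imp φ ψ ihφ ihψ =>
      intro v v' hvv'
      simp only [GTFModel.force, Set.mem_setOf_eq]
      exact imp_congr (ihφ v v' hvv') (ihψ v v' hvv')
  | neg φ ihφ =>
      intro v v' hvv'
      simp only [GTFModel.force, Set.mem_setOf_eq]
      exact not_congr (ihφ v v' hvv')
  | box φ ihφ =>
      intro v v' hvv'
      simp only [GTFModel.force, Set.mem_setOf_eq]
      constructor
      · rintro ⟨O, hO, hOφ⟩
        have hne : O.Nonempty := Set.nonempty_iff_ne_empty.2 (fun h => hc1 v (h ▸ hO))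
        obtain ⟨O', hO', hrel⟩ := (hT.2 v v' hvv').2.1 O hO hne (hmu1 v O hO)
        refine ⟨O', hO', fun u' hu' => ?_⟩
        obtain ⟨u, hu, huu'⟩ := hrel u' hu'
        exact (ihφ u u' huu').1 (hOφ u hu)
      · rintro ⟨O', hO', hOφ⟩
        have hne : O'.Nonempty := Set.nonempty_iff_ne_empty.2 (fun h => hc2 v' (h ▸ hO'))
        obtain ⟨O, hO, hrel⟩ := (hT.2 v v' hvv').2.2 O' hO' hne (hmu2 v' O' hO')
        refine ⟨O, hO, fun u hu => ?_⟩
        obtain ⟨u', hu', huu'⟩ := hrel u hu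
        exact (ihφ u u' huu').2 (hOφ u' hu')
end

section
/- For every in-fact-strong bullet-gtf-model M = (W, μ, ℱ, V) there exists a pointwise-equivalent strong generalized topological model M' = (W, τ, V): taking τ = {∅} ∪ {X⁻¹ : X ∈ μ}, τ is a generalized topology on W with W ∈ τ, and for every world w and formula φ, w ⊨ •φ in M iff w ⊨ □φ in M' (where □ is interpreted via open neighborhoods: w ⊨ □φ iff ∃Z ∈ τ with w ∈ Z ⊆ V(φ)). -/
/-- Bullet forcing: w ⊨ •φ iff there is O ∈ ℱ_w with O⁻¹ ⊆ V(φ), where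
O⁻¹ = {z : O ∈ ℱ_z}. (The • modality reuses `Form.box`.) -/
def GTFModel.bforce {W : Type} (M : GTFModel W) : Form → Set W
  | .pv n => M.V n
  | .bot => ∅
  | .and φ ψ => M.bforce φ ∩ M.bforce ψ
  | .or φ ψ => M.bforce φ ∪ M.bforce ψ
  | .imp φ ψ => {w | w ∈ M.bforce φ → w ∈ M.bforce ψ}
  | .neg φ => {w | w ∉ M.bforce φ}
  | .box φ => {w | ∃ O ∈ M.F w, ∀ v : W, O ∈ M.F v → v ∈ M.bforce φ}

/-- Forcing in a strong generalized topological model (W, τ, V):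
w ⊨ □φ iff some τ-open Z contains w with Z ⊆ V(φ). -/
def sforce {W : Type} (τ : Set (Set W)) (V : ℕ → Set W) : Form → Set W
  | .pv n => V n
  | .bot => ∅
  | .and φ ψ => sforce τ V φ ∩ sforce τ V ψ
  | .or φ ψ => sforce τ V φ ∪ sforce τ V ψ
  | .imp φ ψ => {w | w ∈ sforce τ V φ → w ∈ sforce τ V ψ}
  | .neg φ => {w | w ∉ sforce τ V φ}
  | .box φ => {w | ∃ Z ∈ τ, w ∈ Z ∧ ∀ v ∈ Z, v ∈ sforce τ V φ}

/-- For every in-fact-strong bullet-gtf-model there is a pointwise equivalent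
strong generalized topological model on the same universe, obtained by
taking τ = {∅} ∪ {X⁻¹ : X ∈ μ}. -/
theorem stmt18 {W : Type} (M : GTFModel W)
    (hsuperset : ∀ w ∉ ⋃₀ M.mu, ∀ X ∈ M.F w, ∀ Y ∈ M.mu, X ⊆ Y → Y ∈ M.F w)
    (hpartition : ∀ w ∉ ⋃₀ M.mu, ∀ (ι : Type) (Xs : ι → Set W),
      (∀ i, Xs i ∈ M.mu) → (⋃ i, Xs i) ∈ M.F w → ∃ k, Xs k ∈ M.F w)
    (hnonempty : ∀ w ∉ ⋃₀ M.mu, (M.F w).Nonempty)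
    (τ : Set (Set W))
    (hτ : τ = {Y : Set W | Y = ∅ ∨ ∃ X ∈ M.mu, Y = {z : W | X ∈ M.F z}}) :
    (∅ : Set W) ∈ τ ∧
    (∀ S ⊆ τ, ⋃₀ S ∈ τ) ∧
    (Set.univ : Set W) ∈ τ ∧
    (∀ (w : W) (φ : Form), w ∈ M.bforce φ ↔ w ∈ sforce τ M.V φ) := by

  classical
  -- every member of any F w is in mu
  have hMemMu : ∀ w, ∀ X ∈ M.F w, X ∈ M.mu := by
    intro w X hX
    by_cases hwu : w ∈ ⋃₀ M.mu
    · exact ((M.F_mem w hwu X).mp hX).1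
    · exact M.F_open w hwu X hX
  -- the empty set is never in F w
  have hEmptyF : ∀ w, (∅ : Set W) ∉ M.F w := by
    intro w hw
    by_cases hwu : w ∈ ⋃₀ M.mu
    · exact ((M.F_mem w hwu ∅).mp hw).2
    · obtain ⟨k, _⟩ := hpartition w hwu Empty (fun _ => (∅ : Set W))
        (fun i => i.elim) (by simpa using hw)
      exact k.elim
  -- key lemma: inverse image of a union is the union of inverse images
  have hUnionInv : ∀ (ι : Type) (Xs : ι → Set W), (∀ i, Xs i ∈ M.mu) →
      ∀ w, ((⋃ i, Xs i) ∈ M.F w ↔ ∃ i, Xs i ∈ M.F w) := by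
    intro ι Xs hXs w
    have hU : (⋃ i, Xs i) ∈ M.mu := by
      have := M.mu_sUnion (Set.range Xs) (by rintro _ ⟨i, rfl⟩; exact hXs i)
      simpa [Set.sUnion_range] using this
    by_cases hwu : w ∈ ⋃₀ M.mu
    · constructor
      · intro h
        obtain ⟨i, hi⟩ := Set.mem_iUnion.mp ((M.F_mem w hwu _).mp h).2
        exact ⟨i, (M.F_mem w hwu _).mpr ⟨hXs i, hi⟩⟩
      · rintro ⟨i, hi⟩
        exact (M.F_mem w hwu _).mpr
          ⟨hU, Set.mem_iUnion.mpr ⟨i, ((M.F_mem w hwu _).mp hi).2⟩⟩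
    · constructor
      · intro h; exact hpartition w hwu ι Xs hXs h
      · rintro ⟨i, hi⟩
        exact hsuperset w hwu _ hi _ hU (Set.subset_iUnion Xs i)
  refine ⟨?_, ?_, ?_, ?_⟩
  · rw [hτ]; exact Or.inl rfl
  · -- closure under unions
    intro S hS
    have hS' : ∀ Y : S, ∃ X ∈ M.mu, (Y : Set W) = {z | X ∈ M.F z} := by
      rintro ⟨Y, hY⟩
      have := hS hY; rw [hτ] at this
      rcases this with h | h
      · exact ⟨∅, M.mu_empty, by ext z; simp [h, hEmptyF z]⟩
      · exact h
    choose Xs hXmu hXeq using hS'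
    have hU : (⋃₀ S) = {z | (⋃ Y : S, Xs Y) ∈ M.F z} := by
      ext z
      simp only [Set.mem_setOf_eq, hUnionInv S Xs hXmu z, Set.mem_sUnion]
      constructor
      · rintro ⟨Y, hY, hz⟩
        refine ⟨⟨Y, hY⟩, ?_⟩
        exact (Set.ext_iff.mp (hXeq ⟨Y, hY⟩) z).mp hz
      · rintro ⟨Y, hz⟩
        refine ⟨Y, Y.2, ?_⟩
        exact (Set.ext_iff.mp (hXeq Y) z).mpr hz
    rw [hτ, hU]
    exact Or.inr ⟨_, by
      have := M.mu_sUnion (Set.range Xs) (by rintro _ ⟨i, rfl⟩; exact hXmu i)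
      simpa [Set.sUnion_range] using this, rfl⟩
  · -- univ ∈ τ
    have hbig : (⋃₀ M.mu) ∈ M.mu := M.mu_sUnion M.mu (subset_refl _)
    have hall : ∀ w, (⋃₀ M.mu) ∈ M.F w := by
      intro w
      by_cases hwu : w ∈ ⋃₀ M.mu
      · exact (M.F_mem w hwu _).mpr ⟨hbig, hwu⟩
      · obtain ⟨X, hX⟩ := hnonempty w hwu
        exact hsuperset w hwu X hX _ hbig
          (fun x hx => Set.mem_sUnion.mpr ⟨X, hMemMu w X hX, hx⟩)
    rw [hτ]
    exact Or.inr ⟨⋃₀ M.mu, hbig, by ext z; simp [hall z]⟩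
  · -- pointwise equivalence
    intro w φ
    induction φ generalizing w with
    | pv n => simp [GTFModel.bforce, sforce]
    | bot => simp [GTFModel.bforce, sforce]
    | and φ ψ ihφ ihψ =>
        simp only [GTFModel.bforce, sforce, Set.mem_inter_iff, ihφ, ihψ]
    | or φ ψ ihφ ihψ =>
        simp only [GTFModel.bforce, sforce, Set.mem_union, ihφ, ihψ]
    | imp φ ψ ihφ ihψ =>
        simp only [GTFModel.bforce, sforce, Set.mem_setOf_eq, ihφ, ihψ]
    | neg φ ihφ =>
        simp only [GTFModel.bforce, sforce, Set.mem_setOf_eq, ihφ]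
    | box φ ih =>
        simp only [GTFModel.bforce, sforce, Set.mem_setOf_eq]
        constructor
        · rintro ⟨O, hO, hall⟩
          refine ⟨{z | O ∈ M.F z}, ?_, hO, ?_⟩
          · rw [hτ]; exact Or.inr ⟨O, hMemMu w O hO, rfl⟩
          · intro v hv; exact (ih v).mp (hall v hv)
        · rintro ⟨Z, hZ, hwZ, hall⟩
          rw [hτ] at hZ
          rcases hZ with rfl | ⟨X, hX, rfl⟩
          · exact absurd hwZ (Set.notMem_empty w)
          · exact ⟨X, hwZ, fun v hv => (ih v).mpr (hall v hv)⟩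
end
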